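/- arXiv:2112.09005 — 4 statements merged into one kernel-verified Lean document; each statement's English description precedes it below -/
import Mathlib

section
/- Covariance decomposition identity: let |φ⟩ ∈ ℂ² be a unit vector, |Φ⟩ = |φ⟩^{⊗n}, Q = I − |φ⟩⟨φ|, and for j ∈ {1,…,n} let P_j = (|φ⟩⟨φ|)^{⊗(j−1)} ⊗ Q ⊗ I^{⊗(n−j)}. Then for any unitary U on (ℂ²)^{⊗n} and any operators K₁, K₂ on (ℂ²)^{⊗n}: ⟨Φ|U† K₁ K₂ U|Φ⟩ − ⟨Φ|U† K₁ U|Φ⟩⟨Φ|U† K₂ U|Φ⟩ = Σ_{j=1}^n ⟨Φ| (U† K₁ U) P_j (U† K₂ U) |Φ⟩. -/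
open Matrix Finset
open scoped Kronecker ComplexConjugate

noncomputable section

/-- Configuration space of `n` qubits. -/
abbrev QState (n : ℕ) := Fin n → Fin 2

/-- Operators (matrices) on the Hilbert space `(ℂ²)^{⊗n}` of `n` qubits. -/
abbrev NOp (n : ℕ) := Matrix (QState n) (QState n) ℂ

/-- One-qubit operators. -/
abbrev Op2 := Matrix (Fin 2) (Fin 2) ℂ

/-- Two-qubit operators. -/
abbrev Op4 := Matrix (Fin 2 × Fin 2) (Fin 2 × Fin 2) ℂ

/-- The trace norm `‖A‖₁ = tr √(A†A)`, computed as the sum of the square roots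
of the eigenvalues of the positive semidefinite matrix `A†A`. -/
def traceNorm {m : Type*} [Fintype m] [DecidableEq m] (A : Matrix m m ℂ) : ℝ :=
  ∑ i, Real.sqrt ((Matrix.isHermitian_conjTranspose_mul_self A).eigenvalues i)

/-- The Pauli matrices σ¹, σ², σ³. -/
def pauli : Fin 3 → Op2
  | 0 => !![0, 1; 1, 0]
  | 1 => !![0, -Complex.I; Complex.I, 0]
  | 2 => !![1, 0; 0, -1]

/-- The two-qubit interaction `V₁₂ = Σ_μ V_μ σ^μ ⊗ σ^μ`. -/
def Vint (V : Fin 3 → ℝ) : Op4 := ∑ μ, (V μ : ℂ) • (pauli μ ⊗ₖ pauli μ)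

/-- Embed a one-qubit operator at site `i` of the `n`-qubit lattice (identity elsewhere). -/
def onSite {n : ℕ} (i : Fin n) (A : Op2) : NOp n :=
  Matrix.of fun x y => A (x i) (y i) * ∏ j ∈ Finset.univ.erase i, (if x j = y j then (1 : ℂ) else 0)

/-- Embed a two-qubit operator at the ordered pair of sites `(i, j)` (identity elsewhere). -/
def onPair {n : ℕ} (i j : Fin n) (M : Op4) : NOp n :=
  Matrix.of fun x y => M (x i, x j) (y i, y j) *
    ∏ l ∈ (Finset.univ.erase i).erase j, (if x l = y l then (1 : ℂ) else 0)

/-- The central spin Hamiltonian `H = Σ_i H⁰_i + (1/(n-1)) Σ_{i≠0} V_{0i}`;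
qubit `0` is the central qubit and `V` lists the three couplings `V_μ`. -/
def centralH (n : ℕ) [NeZero n] (H0 : Op2) (V : Fin 3 → ℝ) : NOp n :=
  (∑ i, onSite i H0) +
    ((n : ℂ) - 1)⁻¹ • ∑ i ∈ Finset.univ.erase (0 : Fin n), onPair 0 i (Vint V)

/-- `H(t) - H^{(k)}(t) = (1/(n-1)) Σ_{i ≥ k} V_{0i}`: the interactions removed from the
modified Hamiltonian `H^{(k)}` (the first `k` qubits `0,…,k-1` are decoupled from the rest). -/
def Hrest (n : ℕ) [NeZero n] (V : Fin 3 → ℝ) (k : ℕ) : NOp n :=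
  ((n : ℂ) - 1)⁻¹ • ∑ i ∈ Finset.univ.filter (fun i : Fin n => k ≤ (i : ℕ)), onPair 0 i (Vint V)

/-- `𝓗^{(k)}(t) = U_t† (H(t) - H^{(k)}(t)) U_t`. -/
def scriptH (n : ℕ) [NeZero n] (V : Fin 3 → ℝ) (k : ℕ) (Ut : NOp n) : NOp n :=
  Utᴴ * Hrest n V k * Ut

/-- An operator on `n` qubits is supported on the set `S` of qubits if it is a matrix on
the qubits in `S` tensored with the identity on all other qubit factors. -/
def SupportedOn {n : ℕ} (S : Finset (Fin n)) (A : NOp n) : Prop :=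
  ∃ M : Matrix (∀ _ : S, Fin 2) (∀ _ : S, Fin 2) ℂ, ∀ x y : QState n,
    A x y = M (fun i => x i.1) (fun i => y i.1) *
      ∏ j ∈ Finset.univ \ S, (if x j = y j then (1 : ℂ) else 0)

/-- The product state vector `|Φ⟩ = |φ⟩^{⊗n}`. -/
def prodVec {n : ℕ} (φ : Fin 2 → ℂ) : QState n → ℂ := fun x => ∏ i, φ (x i)

/-- The one-qubit projector `|φ⟩⟨φ|`. -/
def proj (φ : Fin 2 → ℂ) : Op2 := Matrix.of fun a b => φ a * conj (φ b)

/-- The product density matrix `(|φ⟩⟨φ|)^{⊗n}`. -/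
def prodState (n : ℕ) (φ : Fin 2 → ℂ) : NOp n :=
  Matrix.of fun x y => prodVec φ x * conj (prodVec φ y)

/-- Partial trace over all qubits except the central qubit `0`. -/
def ptraceC {n : ℕ} [NeZero n] (ρ : NOp n) : Op2 :=
  Matrix.of fun a b => ∑ g : QState n, if g 0 = b then ρ (Function.update g 0 a) g else 0

/-- Partial trace over all qubits except qubits `0` and `1` (the two-qubit reduced state). -/
def ptrace01 {n : ℕ} [NeZero n] (ρ : NOp n) : Op4 :=
  Matrix.of fun p q => ∑ g : QState n,
    if g 0 = q.1 ∧ g 1 = q.2 then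
      ρ (Function.update (Function.update g 0 p.1) 1 p.2) g else 0

/-- Trace over the second factor of a two-qubit operator. -/
def ptrace2 (M : Op4) : Op2 := Matrix.of fun a b => ∑ c, M (a, c) (b, c)

/-- Commutator of matrices. -/
def matComm {m : Type*} [Fintype m] (A B : Matrix m m ℂ) : Matrix m m ℂ := A * B - B * A

/-- Quantum expectation value `⟨ψ|M|ψ⟩`. -/
def expval {n : ℕ} (ψ : QState n → ℂ) (M : NOp n) : ℂ := star ψ ⬝ᵥ M.mulVec ψ

/-- `Q = I - |φ⟩⟨φ|`. -/
def Qop (φ : Fin 2 → ℂ) : Op2 := 1 - proj φ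

/-- `P_j = (|φ⟩⟨φ|)^{⊗ j} ⊗ Q ⊗ I^{⊗(n-j-1)}` (qubits indexed from 0). -/
def Pop {n : ℕ} (φ : Fin 2 → ℂ) (j : Fin n) : NOp n :=
  Matrix.of fun x y =>
    (∏ i ∈ Finset.univ.filter (fun i : Fin n => i < j), (φ (x i) * conj (φ (y i)))) *
    Qop φ (x j) (y j) *
    ∏ i ∈ Finset.univ.filter (fun i : Fin n => j < i), (if x i = y i then (1 : ℂ) else 0)

/-- The SWAP unitary `χ_{ij}` exchanging tensor factors `i` and `j`. -/
def swapOp (n : ℕ) (i j : Fin n) : NOp n :=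
  Matrix.of fun x y => if x = y ∘ (Equiv.swap i j) then (1 : ℂ) else 0

/-- The normalized commutator supremum `C_k` of the Lieb–Robinson bound, at a fixed time with
evolution operator `Ut`: the sup over nonzero `A` supported on qubits `{0,…,k-1}` and nonzero
`B` supported on qubit `k` of `‖[U† A U, B]‖₁/(‖A‖₁‖B‖₁)`. -/
def Cnorm {n : ℕ} (Ut : NOp n) (k : ℕ) : ℝ :=
  sSup {r : ℝ | ∃ A B : NOp n,
    SupportedOn (Finset.univ.filter fun i : Fin n => (i : ℕ) < k) A ∧ A ≠ 0 ∧
    SupportedOn (Finset.univ.filter fun i : Fin n => (i : ℕ) = k) B ∧ B ≠ 0 ∧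
    r = traceNorm (matComm (Utᴴ * A * Ut) B) / (traceNorm A * traceNorm B)}

/-!
`P_j` is the difference `D_j - D_{j+1}` of the operators `D_k = (|φ⟩⟨φ|)^{⊗k} ⊗ I^{⊗(n-k)}`
(`prefixProj n φ k`), so `Σ_j P_j` telescopes to `D_0 - D_n = I - |Φ⟩⟨Φ|`. Inserting this
resolution of the identity between `U† K₁ U` and `U† K₂ U` (whose product is `U† K₁ K₂ U` because `U U† = I`)
splits off the term `⟨Φ|U† K₁ U|Φ⟩⟨Φ|U† K₂ U|Φ⟩` and leaves the sum over `j`.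
-/

def prefixProj (n : ℕ) (φ : Fin 2 → ℂ) (k : ℕ) : NOp n :=
  Matrix.of fun x y =>
    (∏ i ∈ Finset.univ.filter (fun i : Fin n => (i : ℕ) < k), (φ (x i) * conj (φ (y i)))) *
    ∏ i ∈ Finset.univ.filter (fun i : Fin n => k ≤ (i : ℕ)), (if x i = y i then (1 : ℂ) else 0)

lemma prefixProj_zero (n : ℕ) (φ : Fin 2 → ℂ) : prefixProj n φ 0 = 1 := by
  ext x y
  have hdelta : (∏ i : Fin n, (if x i = y i then (1 : ℂ) else 0)) = if x = y then 1 else 0 := by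
    simp [Finset.prod_boole, funext_iff]
  simp [prefixProj, Matrix.one_apply, hdelta]

lemma prefixProj_self (n : ℕ) (φ : Fin 2 → ℂ) : prefixProj n φ n = prodState n φ := by
  ext x y
  have hempty : Finset.univ.filter (fun i : Fin n => n ≤ (i : ℕ)) = ∅ :=
    Finset.filter_false_of_mem fun i _ => not_le.mpr i.is_lt
  simp [prefixProj, prodState, prodVec, Finset.prod_mul_distrib, hempty]

lemma Pop_eq_prefixProj_sub {n : ℕ} (φ : Fin 2 → ℂ) (j : Fin n) :
    Pop φ j = prefixProj n φ j - prefixProj n φ (j + 1) := by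
  ext x y
  have hge : Finset.univ.filter (fun i : Fin n => (j : ℕ) ≤ i) =
      insert j (Finset.univ.filter (fun i : Fin n => j < i)) := by
    ext i; simp [Fin.ext_iff]; omega
  have hlt : Finset.univ.filter (fun i : Fin n => (i : ℕ) < j + 1) =
      insert j (Finset.univ.filter (fun i : Fin n => i < j)) := by
    ext i; simp [Fin.ext_iff]; omega
  have hgt : Finset.univ.filter (fun i : Fin n => (j : ℕ) + 1 ≤ i) =
      Finset.univ.filter (fun i : Fin n => j < i) :=
    Finset.filter_congr fun i _ => Nat.succ_le_iff
  have hlt' : Finset.univ.filter (fun i : Fin n => (i : ℕ) < j) =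
      Finset.univ.filter (fun i : Fin n => i < j) := rfl
  simp only [Pop, prefixProj, Qop, proj, Matrix.of_apply, Matrix.sub_apply, Matrix.one_apply,
    hge, hlt, hgt, hlt', Finset.prod_insert (by simp : j ∉ Finset.univ.filter (j < ·)),
    Finset.prod_insert (by simp : j ∉ Finset.univ.filter (· < j))]
  ring

lemma prodState_add_sum_Pop (n : ℕ) (φ : Fin 2 → ℂ) :
    prodState n φ + ∑ j : Fin n, Pop φ j = 1 := by
  simp only [Pop_eq_prefixProj_sub]
  rw [Fin.sum_univ_eq_sum_range (fun k => prefixProj n φ k - prefixProj n φ (k + 1)) n,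
    Finset.sum_range_sub', prefixProj_zero, prefixProj_self, add_sub_cancel]

lemma dotProduct_mul_vecMulVec_mul_mulVec {l m n o R : Type*} [Fintype l] [Fintype m] [Fintype n]
    [Fintype o] [CommSemiring R] (u : l → R) (A : Matrix l m R) (x : m → R) (y : n → R)
    (B : Matrix n o R) (w : o → R) :
    u ⬝ᵥ (A * vecMulVec x y * B) *ᵥ w = (u ⬝ᵥ A *ᵥ x) * (y ⬝ᵥ B *ᵥ w) := by
  rw [← mulVec_mulVec, ← mulVec_mulVec, vecMulVec_mulVec, op_smul_eq_smul, mulVec_smul,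
    dotProduct_smul, smul_eq_mul, mul_comm]

lemma prodState_eq_vecMulVec (n : ℕ) (φ : Fin 2 → ℂ) :
    prodState n φ = vecMulVec (prodVec φ) (star (prodVec φ)) := by
  ext x y
  simp [prodState, vecMulVec_apply]

lemma expval_mul_prodState_mul {n : ℕ} (φ : Fin 2 → ℂ) (A B : NOp n) :
    expval (prodVec φ) (A * prodState n φ * B) = expval (prodVec φ) A * expval (prodVec φ) B := by
  rw [expval, prodState_eq_vecMulVec, dotProduct_mul_vecMulVec_mul_mulVec]
  rfl

lemma expval_add {n : ℕ} (ψ : QState n → ℂ) (M N : NOp n) :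
    expval ψ (M + N) = expval ψ M + expval ψ N := by
  simp only [expval, add_mulVec, dotProduct_add]

lemma expval_sum {n : ℕ} (ψ : QState n → ℂ) {ι : Type*} (s : Finset ι) (f : ι → NOp n) :
    expval ψ (∑ j ∈ s, f j) = ∑ j ∈ s, expval ψ (f j) := by
  simp only [expval, sum_mulVec, dotProduct_sum]

theorem statement4_general
    (n : ℕ)
    (φ : Fin 2 → ℂ)
    (U : NOp n) (hU : Uᴴ * U = 1)
    (K₁ K₂ : NOp n) :
    expval (prodVec φ) (Uᴴ * (K₁ * K₂) * U)
        - expval (prodVec φ) (Uᴴ * K₁ * U) * expval (prodVec φ) (Uᴴ * K₂ * U)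
      = ∑ j : Fin n, expval (prodVec φ) ((Uᴴ * K₁ * U) * Pop φ j * (Uᴴ * K₂ * U)) := by
  have hconj : Uᴴ * (K₁ * K₂) * U = (Uᴴ * K₁ * U) * (Uᴴ * K₂ * U) := by
    simp only [Matrix.mul_assoc, ← Matrix.mul_assoc U Uᴴ, mul_eq_one_comm.mp hU, Matrix.one_mul]
  calc _ = expval (prodVec φ) ((Uᴴ * K₁ * U) * (prodState n φ + ∑ j, Pop φ j) * (Uᴴ * K₂ * U))
          - expval (prodVec φ) (Uᴴ * K₁ * U) * expval (prodVec φ) (Uᴴ * K₂ * U) := by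
        rw [prodState_add_sum_Pop, Matrix.mul_one, hconj]
    _ = _ := by
        rw [Matrix.mul_add, Matrix.add_mul, expval_add, expval_mul_prodState_mul, Matrix.mul_sum,
          Matrix.sum_mul, expval_sum, add_sub_cancel_left]

theorem statement4
    (n : ℕ)
    (φ : Fin 2 → ℂ) (hφ : ∑ a, Complex.normSq (φ a) = 1)
    (U : NOp n) (hU : Uᴴ * U = 1)
    (K₁ K₂ : NOp n) :
    expval (prodVec φ) (Uᴴ * (K₁ * K₂) * U)
        - expval (prodVec φ) (Uᴴ * K₁ * U) * expval (prodVec φ) (Uᴴ * K₂ * U)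
      = ∑ j : Fin n, expval (prodVec φ) ((Uᴴ * K₁ * U) * Pop φ j * (Uᴴ * K₂ * U)) :=
  statement4_general n φ U hU K₁ K₂

end
end

section
/- Linear (BBGKY) integral equation: the exact reduced density matrix of the central qubit satisfies ρᶜ(t) = u_t |φ⟩⟨φ| u_t† − i ∫₀^t (u_t u_τ†) tr₂[V₁₂(τ), tr_{3,…,n} ρ(τ)] (u_t u_τ†)† dτ for all t ≥ 0. -/
open Matrix Finset
open scoped Kronecker ComplexConjugate

noncomputable section

/-! Since `ρ(t)` solves `dρ/dt = -i[H, ρ]`, the reduced state `ρᶜ = tr_{≠0} ρ` satisfies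
`dρᶜ/dt = -i tr_{≠0}[H, ρ]`. Under this partial trace the free terms `H⁰_i`, `i ≠ 0`, drop out,
`H⁰_0` gives `[H⁰, ρᶜ]`, and each of the `n - 1` interactions `V_{0i}` gives the same term
`K = tr₂[V₁₂, tr_{≠0,1} ρ]`, because `ρ(t)` is invariant under swapping two environment qubits
(both `H(t)` and the initial product state are); this cancels the prefactor `1/(n-1)`. The
integral equation is then the variation-of-constants formula for `dρᶜ/dt = -i([H⁰, ρᶜ] + K)`,
obtained by differentiating `u_t u_τ† ρᶜ(τ) u_τ u_t†` in `τ`. -/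

open Complex

section Calculus

variable {m m' m'' : Type*}

def HasEntrywiseDerivAt (A : ℝ → Matrix m m' ℂ) (A' : Matrix m m' ℂ) (t : ℝ) : Prop :=
  ∀ x y, HasDerivAt (fun s => A s x y) (A' x y) t

namespace HasEntrywiseDerivAt

variable {A : ℝ → Matrix m m' ℂ} {A' : Matrix m m' ℂ} {t : ℝ}

lemma mul [Fintype m'] {B : ℝ → Matrix m' m'' ℂ} {B' : Matrix m' m'' ℂ}
    (hA : HasEntrywiseDerivAt A A' t) (hB : HasEntrywiseDerivAt B B' t) :
    HasEntrywiseDerivAt (fun s => A s * B s) (A' * B t + A t * B') t := by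
  intro x y
  simpa [Matrix.mul_apply, Finset.sum_add_distrib] using
    HasDerivAt.fun_sum fun k _ => (hA x k).mul (hB k y)

lemma const_mul [Fintype m] (C : Matrix m'' m ℂ) (hA : HasEntrywiseDerivAt A A' t) :
    HasEntrywiseDerivAt (fun s => C * A s) (C * A') t := by
  intro x y
  simpa [Matrix.mul_apply] using HasDerivAt.fun_sum fun k _ => (hA k y).const_mul (C x k)

lemma mul_const [Fintype m'] (C : Matrix m' m'' ℂ) (hA : HasEntrywiseDerivAt A A' t) :
    HasEntrywiseDerivAt (fun s => A s * C) (A' * C) t := by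
  intro x y
  simpa [Matrix.mul_apply] using HasDerivAt.fun_sum fun k _ => (hA x k).mul_const (C k y)

lemma conjTranspose (hA : HasEntrywiseDerivAt A A' t) :
    HasEntrywiseDerivAt (fun s => (A s)ᴴ) A'ᴴ t := fun x y => by
  simpa [Matrix.conjTranspose_apply] using (hA y x).star

lemma congr_deriv {A'' : Matrix m m' ℂ} (hA : HasEntrywiseDerivAt A A' t) (h : A' = A'') :
    HasEntrywiseDerivAt A A'' t :=
  h ▸ hA

end HasEntrywiseDerivAt

lemma continuous_of_hasEntrywiseDerivAt {A : ℝ → Matrix m m' ℂ} {A' : ℝ → Matrix m m' ℂ}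
    (hA : ∀ t, HasEntrywiseDerivAt A (A' t) t) : Continuous A :=
  continuous_matrix fun x y => continuous_iff_continuousAt.2 fun t => (hA t x y).continuousAt

lemma eq_of_hasEntrywiseDerivAt_zero {A : ℝ → Matrix m m' ℂ}
    (hA : ∀ t, HasEntrywiseDerivAt A 0 t) (t s : ℝ) : A t = A s := by
  ext x y
  have hd : ∀ r, HasDerivAt (fun r => A r x y) 0 r := fun r => hA r x y
  exact is_const_of_deriv_eq_zero (fun r => (hd r).differentiableAt) (fun r => (hd r).deriv) t s

end Calculus

section Propagator

variable {m : Type*} [Fintype m] [DecidableEq m]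

def IsPropagator (H U : ℝ → Matrix m m ℂ) : Prop :=
  U 0 = 1 ∧ ∀ t, HasEntrywiseDerivAt U (-I • (H t * U t)) t

namespace IsPropagator

variable {H U : ℝ → Matrix m m ℂ} (hU : IsPropagator H U) (hH : ∀ t, (H t).IsHermitian)
include hU

lemma continuous : Continuous U :=
  continuous_of_hasEntrywiseDerivAt hU.2

include hH in
lemma hasEntrywiseDerivAt_conjTranspose (t : ℝ) :
    HasEntrywiseDerivAt (fun s => (U s)ᴴ) (I • ((U t)ᴴ * H t)) t :=
  (hU.2 t).conjTranspose.congr_deriv <| by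
    rw [Matrix.conjTranspose_smul, Matrix.conjTranspose_mul, (hH t).eq]; simp

include hH in
lemma conjTranspose_mul_mul_self {C : Matrix m m ℂ} (hC : ∀ t, Commute (H t) C) (t : ℝ) :
    (U t)ᴴ * C * U t = C := by
  have hderiv : ∀ s, HasEntrywiseDerivAt (fun r => (U r)ᴴ * C * U r) 0 s := fun s =>
    (((hU.hasEntrywiseDerivAt_conjTranspose hH s).mul_const C).mul (hU.2 s)).congr_deriv <| by
      rw [Matrix.mul_smul, Matrix.smul_mul, Matrix.smul_mul, Matrix.mul_assoc _ (H s),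
        (hC s).eq, ← Matrix.mul_assoc, ← Matrix.mul_assoc, Matrix.mul_assoc _ C (H s), neg_smul,
        add_neg_cancel]
  rw [eq_of_hasEntrywiseDerivAt_zero hderiv t 0, hU.1]
  simp

include hH in
lemma conjTranspose_mul_self (t : ℝ) : (U t)ᴴ * U t = 1 := by
  simpa using hU.conjTranspose_mul_mul_self hH (fun _ => Commute.one_right _) t

include hH in
lemma mul_conjTranspose_self (t : ℝ) : U t * (U t)ᴴ = 1 :=
  mul_eq_one_comm.1 (hU.conjTranspose_mul_self hH t)

include hH in
lemma conj_evolve_eq {C P : Matrix m m ℂ} (hC : ∀ t, Commute (H t) C) (hP : C * P * C = P)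
    (t : ℝ) : C * (U t * P * (U t)ᴴ) * C = U t * P * (U t)ᴴ := by
  have hCU : C * U t = U t * C := by
    conv_rhs => rw [← hU.conjTranspose_mul_mul_self hH hC t]
    rw [← Matrix.mul_assoc, ← Matrix.mul_assoc, hU.mul_conjTranspose_self hH, Matrix.one_mul]
  have hCUh : C * (U t)ᴴ = (U t)ᴴ * C := by
    conv_lhs => rw [← hU.conjTranspose_mul_mul_self hH hC t]
    rw [Matrix.mul_assoc, hU.mul_conjTranspose_self hH, Matrix.mul_one]
  calc C * (U t * P * (U t)ᴴ) * C = (C * U t) * P * ((U t)ᴴ * C) := by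
        simp only [Matrix.mul_assoc]
    _ = U t * (C * P * C) * (U t)ᴴ := by rw [hCU, ← hCUh]; simp only [Matrix.mul_assoc]
    _ = U t * P * (U t)ᴴ := by rw [hP]

include hH in
lemma hasEntrywiseDerivAt_evolve (P : Matrix m m ℂ) (t : ℝ) :
    HasEntrywiseDerivAt (fun s => U s * P * (U s)ᴴ)
      (-I • matComm (H t) (U t * P * (U t)ᴴ)) t :=
  (((hU.2 t).mul_const P).mul (hU.hasEntrywiseDerivAt_conjTranspose hH t)).congr_deriv <| by
    simp only [matComm, Matrix.smul_mul, Matrix.mul_smul, smul_sub, neg_smul, Matrix.neg_mul,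
      Matrix.mul_assoc]
    abel

include hH in
lemma eq_conj_add_integral {r k : ℝ → Matrix m m ℂ}
    (hr : ∀ t, HasEntrywiseDerivAt r (-I • (matComm (H t) (r t) + k t)) t) (hk : Continuous k)
    (t : ℝ) (a b : m) :
    r t a b = (U t * r 0 * (U t)ᴴ) a b
      + ∫ τ in (0:ℝ)..t, (-I • ((U t * (U τ)ᴴ) * k τ * (U t * (U τ)ᴴ)ᴴ)) a b := by
  set g : ℝ → Matrix m m ℂ := fun s => U t * ((U s)ᴴ * r s * U s) * (U t)ᴴ
  have hg : ∀ s, HasEntrywiseDerivAt g (-I • ((U t * (U s)ᴴ) * k s * (U t * (U s)ᴴ)ᴴ)) s :=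
    fun s => (((((hU.hasEntrywiseDerivAt_conjTranspose hH s).mul (hr s)).mul (hU.2 s)).const_mul
      (U t)).mul_const (U t)ᴴ).congr_deriv <| by
        simp only [matComm, Matrix.conjTranspose_mul, Matrix.conjTranspose_conjTranspose,
          Matrix.smul_mul, Matrix.mul_smul, Matrix.mul_add, Matrix.add_mul, Matrix.mul_sub,
          Matrix.sub_mul, smul_add, smul_sub, neg_smul, Matrix.neg_mul, Matrix.mul_neg,
          Matrix.mul_assoc]
        abel
  have hcont : Continuous fun s => -I • ((U t * (U s)ᴴ) * k s * (U t * (U s)ᴴ)ᴴ) := by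
    have hUh := hU.continuous.matrix_conjTranspose
    exact (((continuous_const.matrix_mul hUh).matrix_mul hk).matrix_mul
      (continuous_const.matrix_mul hUh).matrix_conjTranspose).fun_const_smul _
  have hgt : g t = r t := by
    simp only [g, ← Matrix.mul_assoc, hU.mul_conjTranspose_self hH, Matrix.one_mul]
    rw [Matrix.mul_assoc, hU.mul_conjTranspose_self hH, Matrix.mul_one]
  have hg0 : g 0 = U t * r 0 * (U t)ᴴ := by simp [g, hU.1]
  rw [intervalIntegral.integral_eq_sub_of_hasDerivAt (fun s _ => hg s a b)
    ((hcont.matrix_elem a b).intervalIntegrable _ _), hgt, hg0]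
  ring

end IsPropagator

end Propagator

section Commutator

variable {m : Type*} [Fintype m]

lemma matComm_add_left (A B C : Matrix m m ℂ) :
    matComm (A + B) C = matComm A C + matComm B C := by
  simp only [matComm, Matrix.add_mul, Matrix.mul_add]; abel

lemma matComm_smul_left (c : ℂ) (A C : Matrix m m ℂ) :
    matComm (c • A) C = c • matComm A C := by
  simp only [matComm, Matrix.smul_mul, Matrix.mul_smul, smul_sub]

lemma matComm_sum_left {ι : Type*} (s : Finset ι) (A : ι → Matrix m m ℂ) (C : Matrix m m ℂ) :
    matComm (∑ i ∈ s, A i) C = ∑ i ∈ s, matComm (A i) C := by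
  simp only [matComm, sum_mul, mul_sum, sum_sub_distrib]

lemma conj_matComm_of_mul_self [DecidableEq m] {S : Matrix m m ℂ} (hS : S * S = 1)
    (A B : Matrix m m ℂ) : S * matComm A B * S = matComm (S * A * S) (S * B * S) := by
  have h : ∀ X : Matrix m m ℂ, S * (S * X) = X := fun X => by
    rw [← Matrix.mul_assoc, hS, Matrix.one_mul]
  simp only [matComm, Matrix.mul_sub, Matrix.sub_mul, Matrix.mul_assoc, h]

end Commutator

section Configurations

variable {n : ℕ}

lemma sum_prod_boole_erase_mul (i : Fin n) (x : QState n) (f : QState n → ℂ) :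
    ∑ z : QState n, (∏ j ∈ univ.erase i, if x j = z j then (1 : ℂ) else 0) * f z
      = ∑ c, f (Function.update x i c) := by
  have himage : univ.filter (fun z : QState n => ∀ j ∈ univ.erase i, x j = z j)
      = univ.image (Function.update x i) := by
    ext z
    simp only [mem_filter, mem_univ, true_and, mem_erase, and_true, mem_image,
      Function.update_eq_iff]
    exact ⟨fun h => ⟨z i, rfl, fun j hj => h j hj⟩, fun ⟨_, _, h⟩ j hj => h j hj⟩
  rw [← sum_image fun c _ d _ h => Function.update_injective x i h, ← himage, sum_filter]
  simp_rw [prod_boole, boole_mul]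
  congr!

lemma sum_prod_boole_erase_erase_mul {i j : Fin n} (hij : i ≠ j) (x : QState n)
    (f : QState n → ℂ) :
    ∑ z : QState n, (∏ l ∈ (univ.erase i).erase j, if x l = z l then (1 : ℂ) else 0) * f z
      = ∑ c, ∑ d, f (Function.update (Function.update x i c) j d) := by
  have hinj : Function.Injective fun p : Fin 2 × Fin 2 =>
      Function.update (Function.update x i p.1) j p.2 := by
    rintro ⟨c, d⟩ ⟨c', d'⟩ h
    have hi := congrFun h i
    have hj := congrFun h j
    simp only [Function.update_of_ne hij, Function.update_self] at hi hj
    rw [hi, hj]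
  have himage : univ.filter (fun z : QState n => ∀ l ∈ (univ.erase i).erase j, x l = z l)
      = univ.image fun p : Fin 2 × Fin 2 => Function.update (Function.update x i p.1) j p.2 := by
    ext z
    simp only [mem_filter, mem_univ, true_and, mem_erase, and_true, mem_image,
      Function.update_eq_iff, Prod.exists]
    refine ⟨fun h => ⟨z i, z j, rfl, fun l hlj => ?_⟩, fun ⟨c, d, _, h⟩ l ⟨hlj, hli⟩ => ?_⟩
    · rcases eq_or_ne l i with rfl | hli
      · exact Function.update_self ..
      · rw [Function.update_of_ne hli]; exact h l ⟨hlj, hli⟩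
    · simpa [Function.update_of_ne hli] using h l hlj
  rw [← Fintype.sum_prod_type', ← sum_image fun p _ q _ h => hinj h, ← himage, sum_filter]
  simp_rw [prod_boole, boole_mul]
  congr!

lemma sum_filter_apply_eq_update (i : Fin n) (b c : Fin 2) (F : QState n → ℂ) :
    ∑ g with g i = b, F g = ∑ g with g i = c, F (Function.update g i b) := by
  refine sum_nbij' (Function.update · i c) (Function.update · i b) ?_ ?_ ?_ ?_ ?_ <;>
    intro g hg <;> simp only [mem_filter, mem_univ, true_and] at hg <;> simp [← hg]

lemma update_update_update_update (i j : Fin n) (g : QState n) (b c p q : Fin 2) :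
    Function.update (Function.update (Function.update (Function.update g i b) j c) i p) j q
      = Function.update (Function.update g i p) j q := by
  ext l
  simp only [Function.update_apply]
  split_ifs <;> simp_all

lemma sum_filter_apply_apply_eq_update {i j : Fin n} (hij : i ≠ j) (b c p q : Fin 2)
    (F : QState n → ℂ) :
    ∑ g with g i = b ∧ g j = c, F g
      = ∑ g with g i = p ∧ g j = q, F (Function.update (Function.update g i b) j c) := by
  refine sum_nbij' (fun g => Function.update (Function.update g i p) j q)
    (fun g => Function.update (Function.update g i b) j c) ?_ ?_ ?_ ?_ ?_
  any_goals intro g _; simp [Function.update_of_ne hij]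
  all_goals intro g hg; simp only [mem_filter, mem_univ, true_and] at hg
  all_goals simp only [update_update_update_update, ← hg.1, ← hg.2, Function.update_eq_self]

end Configurations

section OperatorEntries

variable {n : ℕ}

lemma onSite_mul_apply (i : Fin n) (A : Op2) (ρ : NOp n) (x y : QState n) :
    (onSite i A * ρ) x y = ∑ c, A (x i) c * ρ (Function.update x i c) y := by
  have h : ∀ z, onSite i A x z * ρ z y
      = (∏ j ∈ univ.erase i, if x j = z j then (1 : ℂ) else 0) * (A (x i) (z i) * ρ z y) := by
    intro z; simp only [onSite, of_apply]; ring
  rw [Matrix.mul_apply, sum_congr rfl fun z _ => h z, sum_prod_boole_erase_mul]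
  simp

lemma mul_onSite_apply (i : Fin n) (A : Op2) (ρ : NOp n) (x y : QState n) :
    (ρ * onSite i A) x y = ∑ c, ρ x (Function.update y i c) * A c (y i) := by
  have h : ∀ z, ρ x z * onSite i A z y
      = (∏ j ∈ univ.erase i, if y j = z j then (1 : ℂ) else 0) * (ρ x z * A (z i) (y i)) := by
    intro z; simp only [onSite, of_apply, eq_comm (a := z _)]; ring
  rw [Matrix.mul_apply, sum_congr rfl fun z _ => h z, sum_prod_boole_erase_mul]
  simp

lemma onPair_mul_apply {i j : Fin n} (hij : i ≠ j) (M : Op4) (ρ : NOp n) (x y : QState n) :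
    (onPair i j M * ρ) x y
      = ∑ p, ∑ q, M (x i, x j) (p, q) * ρ (Function.update (Function.update x i p) j q) y := by
  have h : ∀ z, onPair i j M x z * ρ z y
      = (∏ l ∈ (univ.erase i).erase j, if x l = z l then (1 : ℂ) else 0)
        * (M (x i, x j) (z i, z j) * ρ z y) := by
    intro z; simp only [onPair, of_apply]; ring
  rw [Matrix.mul_apply, sum_congr rfl fun z _ => h z, sum_prod_boole_erase_erase_mul hij]
  simp [Function.update_of_ne hij]

lemma mul_onPair_apply {i j : Fin n} (hij : i ≠ j) (M : Op4) (ρ : NOp n) (x y : QState n) :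
    (ρ * onPair i j M) x y
      = ∑ p, ∑ q, ρ x (Function.update (Function.update y i p) j q) * M (p, q) (y i, y j) := by
  have h : ∀ z, ρ x z * onPair i j M z y
      = (∏ l ∈ (univ.erase i).erase j, if y l = z l then (1 : ℂ) else 0)
        * (ρ x z * M (z i, z j) (y i, y j)) := by
    intro z; simp only [onPair, of_apply, eq_comm (a := z _)]; ring
  rw [Matrix.mul_apply, sum_congr rfl fun z _ => h z, sum_prod_boole_erase_erase_mul hij]
  simp [Function.update_of_ne hij]

end OperatorEntries

lemma ptrace2_sub (X Y : Op4) : ptrace2 (X - Y) = ptrace2 X - ptrace2 Y := by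
  ext a b
  simp [ptrace2, sum_sub_distrib]

lemma Continuous.ptrace2 {X : Type*} [TopologicalSpace X] {A : X → Op4} (hA : Continuous A) :
    Continuous fun s => ptrace2 (A s) :=
  continuous_matrix fun a b =>
    show Continuous fun s => ∑ c, A s (a, c) (b, c) from
      continuous_finsetSum _ fun _ _ => hA.matrix_elem _ _

lemma continuous_Vint {X : Type*} [TopologicalSpace X] {V : Fin 3 → X → ℝ}
    (hV : ∀ μ, Continuous (V μ)) : Continuous fun s => Vint fun μ => V μ s :=
  continuous_finsetSum _ fun μ _ => (continuous_ofReal.comp (hV μ)).smul continuous_const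

section PartialTrace

variable {n : ℕ} [NeZero n]

lemma ptraceC_apply (ρ : NOp n) (a b : Fin 2) :
    ptraceC ρ a b = ∑ g with g 0 = b, ρ (Function.update g 0 a) g := by
  rw [sum_filter]; rfl

lemma ptrace01_apply (ρ : NOp n) (p q : Fin 2 × Fin 2) :
    ptrace01 ρ p q = ∑ g with g 0 = q.1 ∧ g 1 = q.2,
      ρ (Function.update (Function.update g 0 p.1) 1 p.2) g := by
  rw [sum_filter]; rfl

lemma ptraceC_add (X Y : NOp n) : ptraceC (X + Y) = ptraceC X + ptraceC Y := by
  ext a b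
  simp only [ptraceC, of_apply, Matrix.add_apply, ← sum_add_distrib, ite_add_ite, add_zero]

lemma ptraceC_smul (c : ℂ) (X : NOp n) : ptraceC (c • X) = c • ptraceC X := by
  ext a b
  simp only [ptraceC, of_apply, Matrix.smul_apply, smul_eq_mul, mul_sum, mul_ite, mul_zero]

lemma ptraceC_sub (X Y : NOp n) : ptraceC (X - Y) = ptraceC X - ptraceC Y :=
  map_sub (AddMonoidHom.mk' ptraceC ptraceC_add) X Y

lemma ptraceC_sum {ι : Type*} (s : Finset ι) (X : ι → NOp n) :
    ptraceC (∑ i ∈ s, X i) = ∑ i ∈ s, ptraceC (X i) :=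
  map_sum (AddMonoidHom.mk' ptraceC ptraceC_add) X s

lemma HasEntrywiseDerivAt.ptraceC {A : ℝ → NOp n} {A' : NOp n} {t : ℝ}
    (hA : HasEntrywiseDerivAt A A' t) :
    HasEntrywiseDerivAt (fun s => ptraceC (A s)) (ptraceC A') t := fun a b => by
  simp only [ptraceC_apply]
  exact HasDerivAt.fun_sum fun g _ => hA _ _

lemma Continuous.ptrace01 {X : Type*} [TopologicalSpace X] {A : X → NOp n} (hA : Continuous A) :
    Continuous fun s => ptrace01 (A s) :=
  continuous_matrix fun p q => by
    simp only [ptrace01_apply]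
    exact continuous_finsetSum _ fun g _ => hA.matrix_elem _ _

lemma ptraceC_onSite_zero_mul (A : Op2) (ρ : NOp n) :
    ptraceC (onSite 0 A * ρ) = A * ptraceC ρ := by
  ext a b
  rw [Matrix.mul_apply]
  simp only [ptraceC_apply, onSite_mul_apply, Function.update_self,
    Function.update_idem, mul_sum]
  exact sum_comm

lemma ptraceC_mul_onSite_zero (A : Op2) (ρ : NOp n) :
    ptraceC (ρ * onSite 0 A) = ptraceC ρ * A := by
  ext a b
  rw [Matrix.mul_apply]
  simp only [ptraceC_apply, mul_onSite_apply, sum_mul]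
  rw [sum_comm]
  refine sum_congr rfl fun c _ => ?_
  rw [sum_filter_apply_eq_update 0 b c]
  exact sum_congr rfl fun g hg => by simp [← (mem_filter.1 hg).2]

lemma ptraceC_onSite_mul_eq_mul_onSite {i : Fin n} (hi : i ≠ 0) (A : Op2) (ρ : NOp n) :
    ptraceC (onSite i A * ρ) = ptraceC (ρ * onSite i A) := by
  ext a b
  simp only [ptraceC_apply, onSite_mul_apply, mul_onSite_apply, Function.update_of_ne hi]
  rw [← sum_product', ← sum_product']
  have hi' : (0 : Fin n) ≠ i := hi.symm
  -- `(g, c) ↦ (g[i ↦ c], g i)` is an involution exchanging the two summands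
  refine sum_nbij' (fun p => (Function.update p.1 i p.2, p.1 i))
    (fun p => (Function.update p.1 i p.2, p.1 i)) ?_ ?_ ?_ ?_ ?_ <;>
    rintro ⟨g, c⟩ hg <;> simp only [mem_product, mem_filter, mem_univ, true_and, and_true] at hg
  all_goals simp [Function.update_of_ne hi', Function.update_comm hi', hg, mul_comm]

lemma ptraceC_onPair_zero_one_mul (h01 : (0 : Fin n) ≠ 1) (M : Op4) (ρ : NOp n) :
    ptraceC (onPair 0 1 M * ρ) = ptrace2 (M * ptrace01 ρ) := by
  ext a b
  simp only [ptraceC_apply, onPair_mul_apply h01, Function.update_self,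
    Function.update_of_ne h01.symm, Function.update_idem]
  simp only [ptrace2, of_apply, Matrix.mul_apply, ptrace01_apply, Fintype.sum_prod_type, mul_sum]
  rw [← sum_fiberwise _ (· 1)]
  refine sum_congr rfl fun c _ => ?_
  rw [filter_filter, sum_comm]
  refine sum_congr rfl fun p _ => ?_
  rw [sum_comm]
  exact sum_congr rfl fun q _ => sum_congr rfl fun g hg => by rw [(mem_filter.1 hg).2.2]

lemma ptraceC_mul_onPair_zero_one (h01 : (0 : Fin n) ≠ 1) (M : Op4) (ρ : NOp n) :
    ptraceC (ρ * onPair 0 1 M) = ptrace2 (ptrace01 ρ * M) := by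
  ext a b
  simp only [ptraceC_apply, mul_onPair_apply h01]
  simp only [ptrace2, of_apply, Matrix.mul_apply, ptrace01_apply, Fintype.sum_prod_type, sum_mul]
  rw [← sum_fiberwise _ (· 1)]
  refine sum_congr rfl fun c _ => ?_
  rw [filter_filter, sum_comm]
  refine sum_congr rfl fun p _ => ?_
  rw [sum_comm]
  refine sum_congr rfl fun q _ => ?_
  rw [sum_filter_apply_apply_eq_update h01 b c p q]
  refine sum_congr rfl fun g hg => ?_
  rw [mem_filter] at hg
  rw [update_update_update_update, ← hg.2.1, ← hg.2.2, Function.update_eq_self,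
    Function.update_eq_self, Function.update_comm h01, Function.update_idem,
    Function.update_comm h01.symm]
  simp [Function.update_of_ne h01.symm]

lemma ptraceC_prodState {φ : Fin 2 → ℂ} (hφ : ∑ a, Complex.normSq (φ a) = 1) :
    ptraceC (prodState n φ) = proj φ := by
  ext a b
  set v : Fin n → Fin 2 → ℂ := fun l c =>
    if l = 0 then (if c = b then φ a * conj (φ b) else 0) else φ c * conj (φ c)
  have hterm : ∀ g : QState n,
      (if g 0 = b then prodState n φ (Function.update g 0 a) g else 0) = ∏ l, v l (g l) := by
    intro g
    simp only [prodState, prodVec, of_apply, map_prod, ← prod_mul_distrib]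
    split_ifs with h
    · refine prod_congr rfl fun l _ => ?_
      rcases eq_or_ne l 0 with rfl | hl
      · simp [v, h]
      · simp [v, hl]
    · exact (prod_eq_zero (mem_univ 0) (by simp [v, h])).symm
  have hv : ∀ l, l ≠ 0 → ∑ c, v l c = 1 := fun l hl => by
    simp only [v, if_neg hl, Complex.mul_conj, ← Complex.ofReal_sum, hφ, Complex.ofReal_one]
  rw [ptraceC_apply, sum_filter, sum_congr rfl fun g _ => hterm g, ← Fintype.prod_sum,
    Fintype.prod_eq_single 0 hv]
  simp [v, proj]

end PartialTrace

section Swap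

variable {n : ℕ}

lemma comp_swap_comp_swap (i j : Fin n) (x : QState n) :
    (x ∘ Equiv.swap i j) ∘ Equiv.swap i j = x := by
  ext l; simp

lemma swapOp_mul_apply (i j : Fin n) (X : NOp n) (x y : QState n) :
    (swapOp n i j * X) x y = X (x ∘ Equiv.swap i j) y := by
  have h : ∀ w : QState n, x = w ∘ Equiv.swap i j ↔ w = x ∘ Equiv.swap i j := fun w => by
    constructor <;> rintro rfl <;> rw [comp_swap_comp_swap]
  simp [Matrix.mul_apply, swapOp, h]

lemma mul_swapOp_apply (i j : Fin n) (X : NOp n) (x y : QState n) :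
    (X * swapOp n i j) x y = X x (y ∘ Equiv.swap i j) := by
  simp [Matrix.mul_apply, swapOp]

lemma swapOp_conj_apply (i j : Fin n) (X : NOp n) (x y : QState n) :
    (swapOp n i j * X * swapOp n i j) x y = X (x ∘ Equiv.swap i j) (y ∘ Equiv.swap i j) := by
  rw [mul_swapOp_apply, swapOp_mul_apply]

lemma swapOp_mul_self (i j : Fin n) : swapOp n i j * swapOp n i j = 1 := by
  ext x y
  rw [swapOp_mul_apply, swapOp, of_apply, Matrix.one_apply]
  refine if_congr ⟨fun h => ?_, fun h => h ▸ rfl⟩ rfl rfl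
  rw [← comp_swap_comp_swap i j x, h, comp_swap_comp_swap]

lemma swapOp_conj_onSite (i j k : Fin n) (A : Op2) :
    swapOp n i j * onSite k A * swapOp n i j = onSite (Equiv.swap i j k) A := by
  ext x y
  rw [swapOp_conj_apply]
  simp only [onSite, of_apply, Function.comp_apply]
  congr 1
  exact prod_equiv (Equiv.swap i j) (by simp) (fun _ _ => rfl)

lemma swapOp_conj_onPair (i j k k' : Fin n) (M : Op4) :
    swapOp n i j * onPair k k' M * swapOp n i j
      = onPair (Equiv.swap i j k) (Equiv.swap i j k') M := by
  ext x y
  rw [swapOp_conj_apply]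
  simp only [onPair, of_apply, Function.comp_apply]
  congr 1
  exact prod_equiv (Equiv.swap i j) (by simp) (fun _ _ => rfl)

lemma swapOp_conj_prodState (i j : Fin n) (φ : Fin 2 → ℂ) :
    swapOp n i j * prodState n φ * swapOp n i j = prodState n φ := by
  ext x y
  simp only [swapOp_conj_apply, prodState, prodVec, of_apply, Function.comp_apply]
  rw [Equiv.prod_comp (Equiv.swap i j) fun l => φ (x l),
    Equiv.prod_comp (Equiv.swap i j) fun l => φ (y l)]

lemma ptraceC_swapOp_conj [NeZero n] {i j : Fin n} (hi : i ≠ 0) (hj : j ≠ 0) (X : NOp n) :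
    ptraceC (swapOp n i j * X * swapOp n i j) = ptraceC X := by
  have h0 : Equiv.swap i j 0 = 0 := Equiv.swap_apply_of_ne_of_ne hi.symm hj.symm
  ext a b
  simp only [ptraceC_apply, swapOp_conj_apply]
  refine sum_nbij' (· ∘ Equiv.swap i j) (· ∘ Equiv.swap i j) ?_ ?_ ?_ ?_ ?_ <;> intro g hg
  · simp_all
  · simp_all
  · exact comp_swap_comp_swap i j g
  · exact comp_swap_comp_swap i j g
  · rw [← Function.update_comp_eq_of_injective g (Equiv.swap i j).injective 0 a, h0]

end Swap

section Hamiltonian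

variable {n : ℕ}

lemma onSite_conjTranspose (i : Fin n) (A : Op2) : (onSite i A)ᴴ = onSite i Aᴴ := by
  ext x y
  simp [onSite, Matrix.conjTranspose_apply, star_prod, apply_ite star, eq_comm]

lemma onPair_conjTranspose (i j : Fin n) (M : Op4) : (onPair i j M)ᴴ = onPair i j Mᴴ := by
  ext x y
  simp [onPair, Matrix.conjTranspose_apply, star_prod, apply_ite star, eq_comm]

lemma pauli_isHermitian (μ : Fin 3) : (pauli μ).IsHermitian := by
  fin_cases μ <;> ext a b <;> fin_cases a <;> fin_cases b <;> simp [pauli]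

lemma Vint_isHermitian (V : Fin 3 → ℝ) : (Vint V).IsHermitian := by
  simp only [IsHermitian, Vint, conjTranspose_sum, conjTranspose_smul, conjTranspose_kronecker,
    (pauli_isHermitian _).eq, Complex.star_def, Complex.conj_ofReal]

lemma centralH_isHermitian [NeZero n] {H0 : Op2} (hH0 : H0.IsHermitian) (V : Fin 3 → ℝ) :
    (centralH n H0 V).IsHermitian := by
  simp only [IsHermitian, centralH, conjTranspose_add, conjTranspose_sum, conjTranspose_smul,
    onSite_conjTranspose, onPair_conjTranspose, hH0.eq, (Vint_isHermitian V).eq, star_inv₀,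
    star_sub, star_one, star_natCast]

lemma swapOp_conj_centralH [NeZero n] {i j : Fin n} (hi : i ≠ 0) (hj : j ≠ 0) (H0 : Op2)
    (V : Fin 3 → ℝ) : swapOp n i j * centralH n H0 V * swapOp n i j = centralH n H0 V := by
  have h0 : Equiv.swap i j 0 = 0 := Equiv.swap_apply_of_ne_of_ne hi.symm hj.symm
  simp only [centralH, Matrix.mul_add, Matrix.add_mul, mul_sum, sum_mul, Matrix.mul_smul,
    Matrix.smul_mul, swapOp_conj_onSite, swapOp_conj_onPair, h0]
  rw [Equiv.sum_comp (Equiv.swap i j) fun k => onSite k H0,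
    sum_equiv (Equiv.swap i j) (t := univ.erase 0) (g := fun k => onPair 0 k (Vint V))
      (fun k => by simp [(Equiv.swap i j).injective.ne_iff' h0]) fun _ _ => rfl]

lemma commute_centralH_swapOp [NeZero n] {i j : Fin n} (hi : i ≠ 0) (hj : j ≠ 0) (H0 : Op2)
    (V : Fin 3 → ℝ) : Commute (centralH n H0 V) (swapOp n i j) := by
  show _ * _ = _ * _
  nth_rewrite 1 [← swapOp_conj_centralH hi hj H0 V]
  rw [Matrix.mul_assoc, swapOp_mul_self, Matrix.mul_one]

end Hamiltonian

section ReducedDynamics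

variable {n : ℕ} [NeZero n]

lemma ptraceC_matComm_onSite_zero (A : Op2) (ρ : NOp n) :
    ptraceC (matComm (onSite 0 A) ρ) = matComm A (ptraceC ρ) := by
  rw [matComm, ptraceC_sub, ptraceC_onSite_zero_mul, ptraceC_mul_onSite_zero, matComm]

lemma ptraceC_matComm_onSite_of_ne_zero {i : Fin n} (hi : i ≠ 0) (A : Op2) (ρ : NOp n) :
    ptraceC (matComm (onSite i A) ρ) = 0 := by
  rw [matComm, ptraceC_sub, ptraceC_onSite_mul_eq_mul_onSite hi, sub_self]

lemma ptraceC_matComm_onPair_zero_one (h01 : (0 : Fin n) ≠ 1) (M : Op4) (ρ : NOp n) :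
    ptraceC (matComm (onPair 0 1 M) ρ) = ptrace2 (matComm M (ptrace01 ρ)) := by
  rw [matComm, ptraceC_sub, ptraceC_onPair_zero_one_mul h01, ptraceC_mul_onPair_zero_one h01,
    matComm, ptrace2_sub]

lemma ptraceC_matComm_centralH (hn : 2 ≤ n) (H0 : Op2) (V : Fin 3 → ℝ) {ρ : NOp n}
    (hρ : ∀ i j : Fin n, i ≠ 0 → j ≠ 0 → swapOp n i j * ρ * swapOp n i j = ρ) :
    ptraceC (matComm (centralH n H0 V) ρ)
      = matComm H0 (ptraceC ρ) + ptrace2 (matComm (Vint V) (ptrace01 ρ)) := by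
  have h01 : (0 : Fin n) ≠ 1 := by
    rw [Ne, Fin.ext_iff, Fin.val_zero, Fin.val_one', Nat.mod_eq_of_lt hn]; omega
  have hpair : ∀ i ∈ univ.erase (0 : Fin n), ptraceC (matComm (onPair 0 i (Vint V)) ρ)
      = ptrace2 (matComm (Vint V) (ptrace01 ρ)) := by
    intro i hi
    rw [← ptraceC_matComm_onPair_zero_one h01]
    rcases eq_or_ne i 1 with rfl | hi1
    · rfl
    have hi0 := (mem_erase.1 hi).1
    rw [← ptraceC_swapOp_conj h01.symm hi0, conj_matComm_of_mul_self (swapOp_mul_self 1 i),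
      swapOp_conj_onPair, hρ 1 i h01.symm hi0, Equiv.swap_apply_of_ne_of_ne h01 hi0.symm,
      Equiv.swap_apply_right]
  have hcard : ((n : ℂ) - 1)⁻¹ * ((univ.erase (0 : Fin n)).card : ℂ) = 1 := by
    rw [card_erase_of_mem (mem_univ _), card_univ, Fintype.card_fin, Nat.cast_sub (by omega),
      Nat.cast_one, inv_mul_cancel₀]
    exact sub_ne_zero.2 (by exact_mod_cast (by omega : n ≠ 1))
  rw [centralH, matComm_add_left, matComm_smul_left, matComm_sum_left, matComm_sum_left,
    ptraceC_add, ptraceC_smul, ptraceC_sum, ptraceC_sum,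
    sum_eq_single 0 (fun i _ hi => ptraceC_matComm_onSite_of_ne_zero hi _ _) (by simp),
    ptraceC_matComm_onSite_zero, sum_congr rfl hpair, sum_const, ← Nat.cast_smul_eq_nsmul ℂ,
    smul_smul, hcard, one_smul]

end ReducedDynamics

theorem statement6
    (n : ℕ) [NeZero n] (hn : 2 ≤ n)
    (H0 : ℝ → Op2) (hH0 : ∀ t, (H0 t).IsHermitian)
    (V : Fin 3 → ℝ → ℝ) (hVcont : ∀ μ, Continuous (V μ))
    (U : ℝ → NOp n) (hU0 : U 0 = 1)
    (hU : ∀ t x y, HasDerivAt (fun s => U s x y)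
      (((-Complex.I) • (centralH n (H0 t) (fun μ => V μ t) * U t)) x y) t)
    (u : ℝ → Op2) (hu0 : u 0 = 1)
    (hu : ∀ t a b, HasDerivAt (fun s => u s a b) (((-Complex.I) • (H0 t * u t)) a b) t)
    (φ : Fin 2 → ℂ) (hφ : ∑ a, Complex.normSq (φ a) = 1)
    :
    ∀ t : ℝ, 0 ≤ t → ∀ a b : Fin 2,
      ptraceC (U t * prodState n φ * (U t)ᴴ) a b
        = (u t * proj φ * (u t)ᴴ) a b
          + ∫ τ in (0:ℝ)..t,
              (((-Complex.I) • ((u t * (u τ)ᴴ) *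
                ptrace2 (matComm (Vint fun μ => V μ τ)
                  (ptrace01 (U τ * prodState n φ * (U τ)ᴴ))) *
                (u t * (u τ)ᴴ)ᴴ)) a b) := by
  set H : ℝ → NOp n := fun t => centralH n (H0 t) (fun μ => V μ t)
  set ρ : ℝ → NOp n := fun t => U t * prodState n φ * (U t)ᴴ
  have hH : ∀ t, (H t).IsHermitian := fun t => centralH_isHermitian (hH0 t) _
  have hUprop : IsPropagator H U := ⟨hU0, hU⟩
  have hρ_symm : ∀ t (i j : Fin n), i ≠ 0 → j ≠ 0 → swapOp n i j * ρ t * swapOp n i j = ρ t :=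
    fun t i j hi hj => hUprop.conj_evolve_eq hH (fun s => commute_centralH_swapOp hi hj _ _)
      (swapOp_conj_prodState i j φ) t
  have hρc : ∀ t, HasEntrywiseDerivAt (fun s => ptraceC (ρ s))
      (-I • (matComm (H0 t) (ptraceC (ρ t))
        + ptrace2 (matComm (Vint fun μ => V μ t) (ptrace01 (ρ t))))) t := fun t =>
    (hUprop.hasEntrywiseDerivAt_evolve hH _ t).ptraceC.congr_deriv <| by
      rw [ptraceC_smul, ptraceC_matComm_centralH hn _ _ (hρ_symm t)]
  have hK : Continuous fun t => ptrace2 (matComm (Vint fun μ => V μ t) (ptrace01 (ρ t))) := by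
    have hV := continuous_Vint hVcont
    have hρ : Continuous fun t => ptrace01 (ρ t) :=
      ((hUprop.continuous.matrix_mul continuous_const).matrix_mul
        hUprop.continuous.matrix_conjTranspose).ptrace01
    exact ((hV.matrix_mul hρ).sub (hρ.matrix_mul hV)).ptrace2
  intro t _ a b
  rw [IsPropagator.eq_conj_add_integral ⟨hu0, hu⟩ hH0 hρc hK t a b]
  simp [ρ, hU0, ptraceC_prodState hφ]

end
end

section
/- Nonlinear integral equation: the solution X(t) of the nonlinear master equation dX/dt = −i[H_eff(X), X], H_eff(X) = H⁰(t) + Σ_μ V_μ(t) tr(X σ^μ) σ^μ, X(0) = |φ⟩⟨φ|, satisfies X(t) = u_t |φ⟩⟨φ| u_t† − i ∫₀^t (u_t u_τ†) tr₂[V₁₂(τ), X(τ) ⊗ X(τ)] (u_t u_τ†)† dτ for all t ≥ 0, where V₁₂(τ) = Σ_μ V_μ(τ) σ^μ ⊗ σ^μ. -/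
open Matrix Finset
open scoped Kronecker ComplexConjugate

noncomputable section

/-!
Pass to the interaction picture `Y = u† X u`. Since `H⁰` is Hermitian, `u` is unitary and
`Y' = -i u† [H_eff(X) - H⁰, X] u`; integrating from `0` to `t` and conjugating back by `u_t` gives
Duhamel's formula. The partial trace identity `tr₂ [V₁₂, X ⊗ X] = [Σ_μ V_μ tr(X σ^μ) σ^μ, X]`
turns its integrand into the one of the statement.
-/

-- Any norm would do; this one makes square matrices a normed algebra with the entrywise topology.
attribute [local instance] Matrix.linftyOpNormedRing Matrix.linftyOpNormedAlgebra

@[simps]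
def ptrace2LinearMap : Op4 →ₗ[ℂ] Op2 where
  toFun := ptrace2
  map_add' M N := by ext; simp only [ptrace2, of_apply, Matrix.add_apply, sum_add_distrib]
  map_smul' c M := by ext; simp only [ptrace2, of_apply, Matrix.smul_apply, smul_eq_mul,
    mul_sum, RingHom.id_apply]

theorem ptrace2_kronecker (A B : Op2) : ptrace2 (A ⊗ₖ B) = trace B • A := by
  ext a b
  simp only [ptrace2, trace, Matrix.diag, of_apply, kroneckerMap_apply, Matrix.smul_apply,
    smul_eq_mul, sum_mul, mul_comm (A a b)]

theorem ptrace2_matComm_kronecker_self (A X : Op2) :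
    ptrace2 (matComm (A ⊗ₖ A) (X ⊗ₖ X)) = trace (X * A) • matComm A X := by
  rw [matComm, ← mul_kronecker_mul, ← mul_kronecker_mul, ← ptrace2LinearMap_apply, map_sub,
    ptrace2LinearMap_apply, ptrace2LinearMap_apply, ptrace2_kronecker, ptrace2_kronecker,
    trace_mul_comm A X, matComm, smul_sub]

/-- The mean-field part `Σ_μ W_μ tr(X σ^μ) σ^μ` of the effective Hamiltonian `H_eff(X)`. -/
def meanField (W : Fin 3 → ℝ) (X : Op2) : Op2 := ∑ μ, ((W μ : ℂ) * trace (X * pauli μ)) • pauli μ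

theorem ptrace2_matComm_Vint (W : Fin 3 → ℝ) (X : Op2) :
    ptrace2 (matComm (Vint W) (X ⊗ₖ X)) = matComm (meanField W X) X := by
  have hcomm : matComm (Vint W) (X ⊗ₖ X) =
      ∑ μ, (W μ : ℂ) • matComm (pauli μ ⊗ₖ pauli μ) (X ⊗ₖ X) := by
    simp only [matComm, Vint, sum_mul, mul_sum, smul_mul_assoc, mul_smul_comm, smul_sub,
      sum_sub_distrib]
  rw [hcomm, ← ptrace2LinearMap_apply, map_sum]
  simp only [map_smul, ptrace2LinearMap_apply, ptrace2_matComm_kronecker_self, smul_smul]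
  simp only [meanField, matComm, sum_mul, mul_sum, smul_mul_assoc, mul_smul_comm, smul_sub,
    sum_sub_distrib]

theorem continuous_meanField {W : Fin 3 → ℝ → ℝ} {X : ℝ → Op2} (hW : ∀ μ, Continuous (W μ))
    (hX : Continuous X) : Continuous fun τ => meanField (fun μ => W μ τ) (X τ) := by
  unfold meanField
  fun_prop

section Calculus

variable {n : Type*} [Fintype n] [DecidableEq n]

theorem Matrix.hasDerivAt_iff_apply {A : ℝ → Matrix n n ℂ} {A' : Matrix n n ℂ} {t : ℝ} :
    HasDerivAt A A' t ↔ ∀ i j, HasDerivAt (fun s => A s i j) (A' i j) t := by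
  refine hasDerivAt_iff_tendsto_slope.trans <| (tendsto_pi_nhds (A := fun _ : n => n → ℂ)).trans
    (forall_congr' fun i => (tendsto_pi_nhds (A := fun _ : n => ℂ)).trans
      (forall_congr' fun j => ?_))
  rw [hasDerivAt_iff_tendsto_slope]
  rfl

theorem HasDerivAt.matrix_conjTranspose {A : ℝ → Matrix n n ℂ} {A' : Matrix n n ℂ} {t : ℝ}
    (hA : HasDerivAt A A' t) : HasDerivAt (fun s => (A s)ᴴ) A'ᴴ t :=
  hasDerivAt_iff_apply.2 fun i j => (hasDerivAt_iff_apply.1 hA j i).star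

theorem hasDerivAt_conjTranspose_of_schrodinger {H u : ℝ → Matrix n n ℂ} {t : ℝ}
    (hH : (H t).IsHermitian) (hu : HasDerivAt u (-Complex.I • (H t * u t)) t) :
    HasDerivAt (fun s => (u s)ᴴ) (Complex.I • ((u t)ᴴ * H t)) t :=
  hu.matrix_conjTranspose.congr_deriv (by simp [conjTranspose_mul, hH.eq])

theorem mem_unitaryGroup_of_schrodinger {H u : ℝ → Matrix n n ℂ} (hH : ∀ t, (H t).IsHermitian)
    (hu0 : u 0 = 1) (hu : ∀ t, HasDerivAt u (-Complex.I • (H t * u t)) t) (t : ℝ) :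
    u t ∈ unitaryGroup n ℂ := by
  have hderiv : ∀ s, HasDerivAt (fun r => (u r)ᴴ * u r) 0 s := fun s =>
    ((hasDerivAt_conjTranspose_of_schrodinger (hH s) (hu s)).mul (hu s)).congr_deriv (by
      simp only [smul_mul_assoc, mul_smul_comm, Matrix.mul_assoc]
      module)
  rw [mem_unitaryGroup_iff']
  exact is_const_of_deriv_eq_zero (fun s => (hderiv s).differentiableAt)
    (fun s => (hderiv s).deriv) t 0 |>.trans (by simp [hu0])

theorem hasDerivAt_interactionPicture {H S u X : ℝ → Matrix n n ℂ} {t : ℝ}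
    (hH : (H t).IsHermitian) (hu : HasDerivAt u (-Complex.I • (H t * u t)) t)
    (hX : HasDerivAt X (-Complex.I • matComm (H t + S t) (X t)) t) :
    HasDerivAt (fun s => (u s)ᴴ * X s * u s)
      ((u t)ᴴ * (-Complex.I • matComm (S t) (X t)) * u t) t :=
  (((hasDerivAt_conjTranspose_of_schrodinger hH hu).mul hX).mul hu).congr_deriv (by
    simp only [matComm, smul_mul_assoc, mul_smul_comm, add_mul, mul_add, sub_mul, mul_sub,
      Matrix.mul_assoc, smul_sub, smul_add, Pi.mul_apply]
    module)

theorem duhamel_apply {H S u X : ℝ → Matrix n n ℂ} (hH : ∀ t, (H t).IsHermitian) (hu0 : u 0 = 1)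
    (hu : ∀ t, HasDerivAt u (-Complex.I • (H t * u t)) t)
    (hX : ∀ t, HasDerivAt X (-Complex.I • matComm (H t + S t) (X t)) t) (hS : Continuous S)
    (t : ℝ) (a b : n) :
    X t a b = (u t * X 0 * (u t)ᴴ) a b + ∫ τ in (0:ℝ)..t,
      (-Complex.I • ((u t * (u τ)ᴴ) * matComm (S τ) (X τ) * (u t * (u τ)ᴴ)ᴴ)) a b := by
  have hu_cont : Continuous u := continuous_iff_continuousAt.2 fun s => (hu s).continuousAt
  have hX_cont : Continuous X := continuous_iff_continuousAt.2 fun s => (hX s).continuousAt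
  set Z : ℝ → Matrix n n ℂ := fun τ => u t * ((u τ)ᴴ * X τ * u τ) * (u t)ᴴ
  set Z' : ℝ → Matrix n n ℂ := fun τ =>
    u t * ((u τ)ᴴ * (-Complex.I • matComm (S τ) (X τ)) * u τ) * (u t)ᴴ
  have hZ : ∀ τ, HasDerivAt Z (Z' τ) τ := fun τ =>
    ((hasDerivAt_interactionPicture (hH τ) (hu τ) (hX τ)).const_mul (u t)).mul_const _
  have hZ'_cont : Continuous Z' := by
    simp only [Z', matComm]
    fun_prop
  have hZt : Z t = X t := by
    have hunit : u t * (u t)ᴴ = 1 :=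
      mem_unitaryGroup_iff.1 (mem_unitaryGroup_of_schrodinger hH hu0 hu t)
    calc Z t = (u t * (u t)ᴴ) * X t * (u t * (u t)ᴴ) := by simp only [Z, Matrix.mul_assoc]
      _ = X t := by rw [hunit, Matrix.one_mul, Matrix.mul_one]
  have hZ0 : Z 0 = u t * X 0 * (u t)ᴴ := by simp [Z, hu0]
  have hZ' : ∀ τ, Z' τ = -Complex.I • ((u t * (u τ)ᴴ) * matComm (S τ) (X τ) * (u t * (u τ)ᴴ)ᴴ) :=
    fun τ => by simp [Z', conjTranspose_mul, Matrix.mul_assoc]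
  have hFTC := intervalIntegral.integral_eq_sub_of_hasDerivAt
    (fun τ _ => hasDerivAt_iff_apply.1 (hZ τ) a b)
    ((((continuous_apply b).comp (continuous_apply a)).comp hZ'_cont).intervalIntegrable 0 t)
  simp only [← hZ', hFTC, hZt, hZ0, add_sub_cancel]

end Calculus

theorem statement8_general
    (H0 : ℝ → Op2) (hH0 : ∀ t, (H0 t).IsHermitian)
    (V : Fin 3 → ℝ → ℝ) (hVcont : ∀ μ, Continuous (V μ))
    (u : ℝ → Op2) (hu0 : u 0 = 1)
    (hu : ∀ t a b, HasDerivAt (fun s => u s a b) (((-Complex.I) • (H0 t * u t)) a b) t)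
    (φ : Fin 2 → ℂ)
    (X : ℝ → Op2) (hX0 : X 0 = proj φ)
    (hX : ∀ t a b, HasDerivAt (fun s => X s a b)
      (((-Complex.I) • matComm
        (H0 t + ∑ μ, ((V μ t : ℂ) * Matrix.trace (X t * pauli μ)) • pauli μ) (X t)) a b) t)
    :
    ∀ t : ℝ, 0 ≤ t → ∀ a b : Fin 2,
      X t a b
        = (u t * proj φ * (u t)ᴴ) a b
          + ∫ τ in (0:ℝ)..t,
              (((-Complex.I) • ((u t * (u τ)ᴴ) *
                ptrace2 (matComm (Vint fun μ => V μ τ) (X τ ⊗ₖ X τ)) *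
                (u t * (u τ)ᴴ)ᴴ)) a b) := by
  have hu' : ∀ t, HasDerivAt u (-Complex.I • (H0 t * u t)) t := fun t =>
    hasDerivAt_iff_apply.2 (hu t)
  have hX' : ∀ t, HasDerivAt X
      (-Complex.I • matComm (H0 t + meanField (fun μ => V μ t) (X t)) (X t)) t := fun t =>
    hasDerivAt_iff_apply.2 (hX t)
  have hX_cont : Continuous X := continuous_iff_continuousAt.2 fun t => (hX' t).continuousAt
  intro t _ a b
  simp only [ptrace2_matComm_Vint, ← hX0]
  exact duhamel_apply hH0 hu0 hu' hX' (continuous_meanField hVcont hX_cont) t a b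

theorem statement8
    (H0 : ℝ → Op2) (hH0 : ∀ t, (H0 t).IsHermitian)
    (V : Fin 3 → ℝ → ℝ) (hVcont : ∀ μ, Continuous (V μ))
    (u : ℝ → Op2) (hu0 : u 0 = 1)
    (hu : ∀ t a b, HasDerivAt (fun s => u s a b) (((-Complex.I) • (H0 t * u t)) a b) t)
    (φ : Fin 2 → ℂ) (hφ : ∑ a, Complex.normSq (φ a) = 1)
    (X : ℝ → Op2) (hX0 : X 0 = proj φ)
    (hX : ∀ t a b, HasDerivAt (fun s => X s a b)
      (((-Complex.I) • matComm
        (H0 t + ∑ μ, ((V μ t : ℂ) * Matrix.trace (X t * pauli μ)) • pauli μ) (X t)) a b) t)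
    :
    ∀ t : ℝ, 0 ≤ t → ∀ a b : Fin 2,
      X t a b
        = (u t * proj φ * (u t)ᴴ) a b
          + ∫ τ in (0:ℝ)..t,
              (((-Complex.I) • ((u t * (u τ)ᴴ) *
                ptrace2 (matComm (Vint fun μ => V μ τ) (X τ ⊗ₖ X τ)) *
                (u t * (u τ)ᴴ)ᴴ)) a b) :=
  statement8_general H0 hH0 V hVcont u hu0 hu φ X hX0 hX
end
end

section
/- Grönwall-type iteration lemma (second form): let a, b ≥ 0 and c ≥ 2a with a > 0, and let f : [0,∞) → ℝ be continuous with 0 ≤ f(t) ≤ 2 for all t, satisfying f(t) ≤ a ∫₀^t f(τ) dτ + b (e^{ct} − 1) for all t ≥ 0. Then f(t) ≤ 2b (e^{ct} − 1) for all t ≥ 0. -/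
open Matrix Finset
open scoped Kronecker ComplexConjugate

noncomputable section

/-! The function `u = f - h` with `h t = 2 b (e^{ct} - 1)` satisfies the homogeneous inequality
`u t ≤ a ∫₀ᵗ u`, because `c ≥ 2a` makes `h` a supersolution: `a ∫₀ᵗ h + b (e^{ct} - 1) ≤ h t`.
Iterating the homogeneous inequality `q` times from `u ≤ 2` gives `u t ≤ 2 (a t)^q / q!`,
which tends to `0`. -/

open intervalIntegral Real Filter

lemma mul_integral_exp_mul_sub_one (c t : ℝ) :
    c * ∫ τ in (0:ℝ)..t, (exp (c * τ) - 1) = exp (c * t) - 1 - c * t := by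
  rw [integral_sub ((by fun_prop : Continuous fun τ => exp (c * τ)).intervalIntegrable 0 t)
    intervalIntegrable_const, mul_sub, mul_integral_comp_mul_left, integral_exp, integral_const]
  simp

lemma two_mul_integral_exp_mul_sub_one_le {a c t : ℝ} (hc : 0 < c) (hac : 2 * a ≤ c)
    (ht : 0 ≤ t) : 2 * a * ∫ τ in (0:ℝ)..t, (exp (c * τ) - 1) ≤ exp (c * t) - 1 := by
  have hI : 0 ≤ ∫ τ in (0:ℝ)..t, (exp (c * τ) - 1) :=
    integral_nonneg ht fun τ hτ => sub_nonneg.2 (one_le_exp (by nlinarith [hτ.1]))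
  calc 2 * a * ∫ τ in (0:ℝ)..t, (exp (c * τ) - 1)
      ≤ c * ∫ τ in (0:ℝ)..t, (exp (c * τ) - 1) := mul_le_mul_of_nonneg_right hac hI
    _ = exp (c * t) - 1 - c * t := mul_integral_exp_mul_sub_one c t
    _ ≤ exp (c * t) - 1 := by nlinarith

lemma mul_integral_mul_pow_div_factorial (a M t : ℝ) (q : ℕ) :
    a * ∫ τ in (0:ℝ)..t, M * (a * τ) ^ q / q.factorial =
      M * (a * t) ^ (q + 1) / (q + 1).factorial := by
  have h : (fun τ : ℝ => M * (a * τ) ^ q / q.factorial) =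
      fun τ => M * a ^ q / q.factorial * τ ^ q := by
    funext τ; ring
  rw [h, integral_const_mul, integral_pow, Nat.factorial_succ]
  push_cast
  field_simp
  ring

section HomogeneousIntegralInequality

variable {u : ℝ → ℝ} {a M : ℝ}

lemma le_mul_pow_div_factorial_of_le_mul_integral (ha : 0 ≤ a)
    (hu : ∀ t, 0 ≤ t → IntervalIntegrable u MeasureTheory.volume 0 t)
    (huM : ∀ t, 0 ≤ t → u t ≤ M) (hle : ∀ t, 0 ≤ t → u t ≤ a * ∫ τ in (0:ℝ)..t, u τ) (q : ℕ) :
    ∀ t, 0 ≤ t → u t ≤ M * (a * t) ^ q / q.factorial := by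
  induction q with
  | zero => simpa using huM
  | succ q ih =>
    intro t ht
    calc u t ≤ a * ∫ τ in (0:ℝ)..t, u τ := hle t ht
      _ ≤ a * ∫ τ in (0:ℝ)..t, M * (a * τ) ^ q / q.factorial := by
        gcongr
        exact integral_mono_on ht (hu t ht)
          ((by fun_prop : Continuous _).intervalIntegrable _ _) fun τ hτ => ih τ hτ.1
      _ = M * (a * t) ^ (q + 1) / (q + 1).factorial := mul_integral_mul_pow_div_factorial a M t q

lemma nonpos_of_le_mul_integral (ha : 0 ≤ a)
    (hu : ∀ t, 0 ≤ t → IntervalIntegrable u MeasureTheory.volume 0 t)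
    (huM : ∀ t, 0 ≤ t → u t ≤ M) (hle : ∀ t, 0 ≤ t → u t ≤ a * ∫ τ in (0:ℝ)..t, u τ) :
    ∀ t, 0 ≤ t → u t ≤ 0 := by
  intro t ht
  have hlim : Tendsto (fun q : ℕ => M * (a * t) ^ q / q.factorial) atTop (nhds 0) := by
    simpa [mul_div_assoc] using (FloorSemiring.tendsto_pow_div_factorial_atTop (a * t)).const_mul M
  exact ge_of_tendsto hlim (Eventually.of_forall fun q =>
    le_mul_pow_div_factorial_of_le_mul_integral ha hu huM hle q t ht)

end HomogeneousIntegralInequality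

lemma le_of_le_mul_integral_add {f g h : ℝ → ℝ} {a M : ℝ} (ha : 0 ≤ a)
    (hf : ∀ t, 0 ≤ t → IntervalIntegrable f MeasureTheory.volume 0 t)
    (hh : ∀ t, 0 ≤ t → IntervalIntegrable h MeasureTheory.volume 0 t)
    (hfhM : ∀ t, 0 ≤ t → f t - h t ≤ M)
    (hfg : ∀ t, 0 ≤ t → f t ≤ a * (∫ τ in (0:ℝ)..t, f τ) + g t)
    (hhg : ∀ t, 0 ≤ t → a * (∫ τ in (0:ℝ)..t, h τ) + g t ≤ h t) :
    ∀ t, 0 ≤ t → f t ≤ h t := by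
  have hdiff := nonpos_of_le_mul_integral ha (fun t ht => (hf t ht).sub (hh t ht)) hfhM
    fun t ht => by
      rw [integral_sub (hf t ht) (hh t ht), mul_sub]
      linarith [hfg t ht, hhg t ht]
  exact fun t ht => sub_nonpos.1 (hdiff t ht)

theorem statement17
    (a b c : ℝ) (ha : 0 < a) (hb : 0 ≤ b) (hc : 2 * a ≤ c)
    (f : ℝ → ℝ) (hfcont : ContinuousOn f (Set.Ici 0))
    (hfbd : ∀ t : ℝ, 0 ≤ t → 0 ≤ f t ∧ f t ≤ 2)
    (hineq : ∀ t : ℝ, 0 ≤ t →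
      f t ≤ a * (∫ τ in (0:ℝ)..t, f τ) + b * (Real.exp (c * t) - 1)) :
    ∀ t : ℝ, 0 ≤ t → f t ≤ 2 * b * (Real.exp (c * t) - 1) := by
  have hc0 : 0 < c := by linarith
  have hexp : ∀ t : ℝ, 0 ≤ t → 0 ≤ exp (c * t) - 1 := fun t ht =>
    sub_nonneg.2 (one_le_exp (by positivity))
  refine le_of_le_mul_integral_add ha.le (M := 2) (fun t ht => ?_)
    (fun t _ => (by fun_prop : Continuous _).intervalIntegrable _ _) (fun t ht => ?_) hineq
    fun t ht => ?_
  · exact (hfcont.mono (by simp [Set.uIcc_of_le ht, Set.Icc_subset_Ici_self])).intervalIntegrable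
  · linarith [(hfbd t ht).2, mul_nonneg hb (hexp t ht)]
  · rw [integral_const_mul]
    linarith [mul_le_mul_of_nonneg_left (two_mul_integral_exp_mul_sub_one_le hc0 hc ht) hb]

end
end
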